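/- In the setting of the symplectic Krein formula, assume additionally that the closures of T(dom(A₁)) and T(dom(A₂)) are Lagrangian subspaces of 𝔥 × 𝔥 with orthogonal projections Q₁ and Q₂. Then R₂(ζ) − R₁(ζ) = (T R₂(ζ̄))* Q₂ J Q₁ (T R₁(ζ)), and consequently R₂(ζ) − R₁(ζ) = (T R₂(ζ̄))* (Q₂ − Q₁) J Q₁ (T R₁(ζ)); in particular ‖R₂(ζ) − R₁(ζ)‖ ≤ ‖T R₂(ζ̄)‖ · ‖Q₂ − Q₁‖ · ‖T R₁(ζ)‖. -/

import Mathlib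

/-!
Green's identity turns `⟪f, (R₂ - R₁) g⟫` into the symplectic form `⟪T R₂(ζ̄) f, J T R₁(ζ) g⟫`
of two boundary values, which lie in the ranges of `Q₂` and `Q₁`; so both projections can be
inserted for free. Since the range of `Q₁` is isotropic, `Q₁ J Q₁ = 0`, which lets `Q₂` be
replaced by `Q₂ - Q₁`; the norm bound follows because `J` is an isometry.
-/

open scoped InnerProductSpace
open ContinuousLinearMap

/-- The operator `J(f₁,f₂) = (f₂, −f₁)` on `𝔥 ×₂ 𝔥`. -/
noncomputable def Jsymp (𝔥 : Type*)
    [NormedAddCommGroup 𝔥] [InnerProductSpace ℂ 𝔥] [CompleteSpace 𝔥] :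
    WithLp 2 (𝔥 × 𝔥) →L[ℂ] WithLp 2 (𝔥 × 𝔥) :=
  ((WithLp.prodContinuousLinearEquiv 2 ℂ 𝔥 𝔥).symm.toContinuousLinearMap) ∘L
    (((ContinuousLinearMap.snd ℂ 𝔥 𝔥).prod (-(ContinuousLinearMap.fst ℂ 𝔥 𝔥))) ∘L
      (WithLp.prodContinuousLinearEquiv 2 ℂ 𝔥 𝔥).toContinuousLinearMap)

section Jsymp

variable {𝔥 : Type*} [NormedAddCommGroup 𝔥] [InnerProductSpace ℂ 𝔥] [CompleteSpace 𝔥]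

@[simp]
lemma Jsymp_fst (p : WithLp 2 (𝔥 × 𝔥)) : (Jsymp 𝔥 p).fst = p.snd := by
  simp [Jsymp]

@[simp]
lemma Jsymp_snd (p : WithLp 2 (𝔥 × 𝔥)) : (Jsymp 𝔥 p).snd = -p.fst := by
  simp [Jsymp]

lemma inner_Jsymp_right (p q : WithLp 2 (𝔥 × 𝔥)) :
    ⟪p, Jsymp 𝔥 q⟫_ℂ = ⟪p.fst, q.snd⟫_ℂ - ⟪p.snd, q.fst⟫_ℂ := by
  rw [WithLp.prod_inner_apply, WithLp.ofLp_fst, WithLp.ofLp_snd, WithLp.ofLp_fst,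
    WithLp.ofLp_snd, Jsymp_fst, Jsymp_snd, inner_neg_right]
  ring

lemma norm_Jsymp_apply (p : WithLp 2 (𝔥 × 𝔥)) : ‖Jsymp 𝔥 p‖ = ‖p‖ := by
  rw [WithLp.prod_norm_eq_of_L2, WithLp.prod_norm_eq_of_L2, Jsymp_fst, Jsymp_snd, norm_neg,
    add_comm]

lemma opNorm_Jsymp_comp_le {E : Type*} [NormedAddCommGroup E] [NormedSpace ℂ E]
    (X : E →L[ℂ] WithLp 2 (𝔥 × 𝔥)) : ‖Jsymp 𝔥 ∘L X‖ ≤ ‖X‖ :=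
  opNorm_le_bound _ (norm_nonneg X) fun x => by
    rw [comp_apply, norm_Jsymp_apply]
    exact X.le_opNorm x

end Jsymp

section Resolvent

variable {𝕜 E : Type*} [RCLike 𝕜] [NormedAddCommGroup E] [InnerProductSpace 𝕜 E]

lemma inner_resolvent_conj_left {B : E →ₗ.[𝕜] E} (hB : B.IsFormalAdjoint B) {ζ : 𝕜}
    {R R' : E →L[𝕜] E} (hm : ∀ f, R f ∈ B.domain) (hr : ∀ f, B ⟨R f, hm f⟩ - ζ • R f = f)
    (hm' : ∀ f, R' f ∈ B.domain)
    (hr' : ∀ f, B ⟨R' f, hm' f⟩ - starRingEnd 𝕜 ζ • R' f = f) (f g : E) :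
    ⟪R' f, g⟫_𝕜 = ⟪f, R g⟫_𝕜 :=
  calc ⟪R' f, g⟫_𝕜 = ⟪R' f, B ⟨R g, hm g⟩ - ζ • R g⟫_𝕜 := by rw [hr]
    _ = ⟪B ⟨R' f, hm' f⟩ - starRingEnd 𝕜 ζ • R' f, R g⟫_𝕜 := by
      rw [inner_sub_right, inner_sub_left, inner_smul_right, inner_smul_left, RCLike.conj_conj,
        hB ⟨R' f, hm' f⟩ ⟨R g, hm g⟩]
    _ = ⟪f, R g⟫_𝕜 := by rw [hr']

lemma inner_resolvent_sub_resolvent {B₁ B₂ : E →ₗ.[𝕜] E} {ζ : 𝕜} {R₁ R₂ R₂' : E →L[𝕜] E}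
    (hm₁ : ∀ f, R₁ f ∈ B₁.domain) (hr₁ : ∀ f, B₁ ⟨R₁ f, hm₁ f⟩ - ζ • R₁ f = f)
    (hm₂' : ∀ f, R₂' f ∈ B₂.domain)
    (hr₂' : ∀ f, B₂ ⟨R₂' f, hm₂' f⟩ - starRingEnd 𝕜 ζ • R₂' f = f)
    (hR₂ : ∀ f g, ⟪R₂' f, g⟫_𝕜 = ⟪f, R₂ g⟫_𝕜) (f g : E) :
    ⟪f, (R₂ - R₁) g⟫_𝕜 = ⟪R₂' f, B₁ ⟨R₁ g, hm₁ g⟩⟫_𝕜 - ⟪B₂ ⟨R₂' f, hm₂' f⟩, R₁ g⟫_𝕜 := by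
  have h₁ : ⟪R₂' f, g⟫_𝕜 = ⟪R₂' f, B₁ ⟨R₁ g, hm₁ g⟩⟫_𝕜 - ζ * ⟪R₂' f, R₁ g⟫_𝕜 := by
    rw [← inner_smul_right, ← inner_sub_right, hr₁]
  have h₂ : ⟪f, R₁ g⟫_𝕜 = ⟪B₂ ⟨R₂' f, hm₂' f⟩, R₁ g⟫_𝕜 - ζ * ⟪R₂' f, R₁ g⟫_𝕜 := by
    rw [← RCLike.conj_conj ζ, ← inner_smul_left, ← inner_sub_left, hr₂']
  rw [sub_apply, inner_sub_right, ← hR₂, h₁, h₂]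
  ring

end Resolvent

namespace LinearPMap

variable {𝕜 E : Type*} [RCLike 𝕜] [NormedAddCommGroup E] [InnerProductSpace 𝕜 E]
  [CompleteSpace E] {A B : E →ₗ.[𝕜] E}

lemma _root_.IsSelfAdjoint.isFormalAdjoint (hB : IsSelfAdjoint B) : B.IsFormalAdjoint B := by
  have h := adjoint_isFormalAdjoint hB.dense_domain
  rwa [isSelfAdjoint_def.1 hB] at h

lemma _root_.IsSelfAdjoint.le_adjoint_of_le (hB : IsSelfAdjoint B)
    (hA : Dense (A.domain : Set E)) (hAB : A ≤ B) : B ≤ A† :=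
  IsFormalAdjoint.le_adjoint hA fun x y => by
    rw [hAB.2 (x := x) (y := ⟨x, hAB.1 x.2⟩) rfl]
    exact hB.isFormalAdjoint _ y

end LinearPMap

lemma apply_apply_eq_zero_of_isotropic {𝕜 E : Type*} [RCLike 𝕜] [NormedAddCommGroup E]
    [InnerProductSpace 𝕜 E] [CompleteSpace E] {Q J : E →L[𝕜] E} (hQ : IsSelfAdjoint Q)
    (hiso : ∀ p ∈ LinearMap.range (Q : E →ₗ[𝕜] E), ∀ q ∈ LinearMap.range (Q : E →ₗ[𝕜] E),
      ⟪J p, q⟫_𝕜 = 0)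
    {p : E} (hp : p ∈ LinearMap.range (Q : E →ₗ[𝕜] E)) : Q (J p) = 0 :=
  ext_inner_right 𝕜 fun q => by
    rw [← adjoint_inner_right, hQ.adjoint_eq, inner_zero_left]
    exact hiso p hp _ ⟨q, rfl⟩

lemma inner_sub_inner_eq_inner_Jsymp {H 𝔥 : Type*}
    [NormedAddCommGroup H] [InnerProductSpace ℂ H] [CompleteSpace H]
    [NormedAddCommGroup 𝔥] [InnerProductSpace ℂ 𝔥] [CompleteSpace 𝔥]
    {A : H →ₗ.[ℂ] H} {D : Submodule ℂ H} (hDsub : D ≤ A.adjoint.domain)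
    {T : D →ₗ[ℂ] WithLp 2 (𝔥 × 𝔥)}
    (hGreen : ∀ u v : D,
      ⟪A.adjoint ⟨(u : H), hDsub u.2⟩, (v : H)⟫_ℂ
          - ⟪(u : H), A.adjoint ⟨(v : H), hDsub v.2⟩⟫_ℂ
        = ⟪(T u).snd, (T v).fst⟫_ℂ - ⟪(T u).fst, (T v).snd⟫_ℂ)
    {A₁ A₂ : H →ₗ.[ℂ] H} (hle₁ : A₁ ≤ A.adjoint) (hdom₁ : A₁.domain ≤ D)
    (hle₂ : A₂ ≤ A.adjoint) (hdom₂ : A₂.domain ≤ D)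
    {u v : H} (hu : u ∈ A₂.domain) (hv : v ∈ A₁.domain) :
    ⟪u, A₁ ⟨v, hv⟩⟫_ℂ - ⟪A₂ ⟨u, hu⟩, v⟫_ℂ
      = ⟪T ⟨u, hdom₂ hu⟩, Jsymp 𝔥 (T ⟨v, hdom₁ hv⟩)⟫_ℂ := by
  have hG := hGreen ⟨u, hdom₂ hu⟩ ⟨v, hdom₁ hv⟩
  rw [← hle₂.2 (x := ⟨u, hu⟩) rfl, ← hle₁.2 (x := ⟨v, hv⟩) rfl] at hG
  rw [inner_Jsymp_right]
  linear_combination -hG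

lemma symplectic_krein_formula {H 𝔥 : Type*}
    [NormedAddCommGroup H] [InnerProductSpace ℂ H] [CompleteSpace H]
    [NormedAddCommGroup 𝔥] [InnerProductSpace ℂ 𝔥] [CompleteSpace 𝔥]
    {A : H →ₗ.[ℂ] H} (hdense : Dense (A.domain : Set H))
    {D : Submodule ℂ H} (hDsub : D ≤ A.adjoint.domain) {T : D →ₗ[ℂ] WithLp 2 (𝔥 × 𝔥)}
    (hGreen : ∀ u v : D,
      ⟪A.adjoint ⟨(u : H), hDsub u.2⟩, (v : H)⟫_ℂ
          - ⟪(u : H), A.adjoint ⟨(v : H), hDsub v.2⟩⟫_ℂ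
        = ⟪(T u).snd, (T v).fst⟫_ℂ - ⟪(T u).fst, (T v).snd⟫_ℂ)
    {A₁ A₂ : H →ₗ.[ℂ] H}
    (hA₁ : A ≤ A₁) (hsa₁ : IsSelfAdjoint A₁) (hdom₁ : A₁.domain ≤ D)
    (hA₂ : A ≤ A₂) (hsa₂ : IsSelfAdjoint A₂) (hdom₂ : A₂.domain ≤ D)
    {ζ : ℂ} {R₁ R₂ R₂' : H →L[ℂ] H}
    (hm₁ : ∀ f, R₁ f ∈ A₁.domain) (hr₁ : ∀ f, A₁ ⟨R₁ f, hm₁ f⟩ - ζ • R₁ f = f)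
    (hm₂ : ∀ f, R₂ f ∈ A₂.domain) (hr₂ : ∀ f, A₂ ⟨R₂ f, hm₂ f⟩ - ζ • R₂ f = f)
    (hm₂' : ∀ f, R₂' f ∈ A₂.domain)
    (hr₂c : ∀ f, A₂ ⟨R₂' f, hm₂' f⟩ - starRingEnd ℂ ζ • R₂' f = f)
    {TR₁ TR₂' : H →L[ℂ] WithLp 2 (𝔥 × 𝔥)}
    (hTR₁ : ∀ f, TR₁ f = T ⟨R₁ f, hdom₁ (hm₁ f)⟩)
    (hTR₂' : ∀ f, TR₂' f = T ⟨R₂' f, hdom₂ (hm₂' f)⟩) :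
    R₂ - R₁ = adjoint TR₂' ∘L (Jsymp 𝔥 ∘L TR₁) := by
  have hR₂ := inner_resolvent_conj_left hsa₂.isFormalAdjoint hm₂ hr₂ hm₂' hr₂c
  ext g
  refine ext_inner_left ℂ fun f => ?_
  rw [inner_resolvent_sub_resolvent hm₁ hr₁ hm₂' hr₂c hR₂,
    inner_sub_inner_eq_inner_Jsymp hDsub hGreen (hsa₁.le_adjoint_of_le hdense hA₁) hdom₁
      (hsa₂.le_adjoint_of_le hdense hA₂) hdom₂,
    comp_apply, comp_apply, adjoint_inner_right, hTR₁, hTR₂']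

lemma comp_eq_self_of_forall_mem_range {R M N : Type*} [Semiring R] [TopologicalSpace M]
    [AddCommMonoid M] [Module R M] [TopologicalSpace N] [AddCommMonoid N] [Module R N]
    {Q : N →L[R] N} (hQ : IsIdempotentElem Q) {X : M →L[R] N}
    (hX : ∀ x, X x ∈ LinearMap.range (Q : N →ₗ[R] N)) :
    Q ∘L X = X :=
  ext fun x => (LinearMap.IsIdempotentElem.mem_range_iff hQ.toLinearMap).1 (hX x)

theorem symplectic_krein_formula_projections_general
    {H 𝔥 : Type*}
    [NormedAddCommGroup H] [InnerProductSpace ℂ H] [CompleteSpace H]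
    [NormedAddCommGroup 𝔥] [InnerProductSpace ℂ 𝔥] [CompleteSpace 𝔥]
    (A : H →ₗ.[ℂ] H)
    (hdense : Dense (A.domain : Set H))
    (D : Submodule ℂ H)
    (hDsub : D ≤ A.adjoint.domain)
    (T : D →ₗ[ℂ] WithLp 2 (𝔥 × 𝔥))
    (hGreen : ∀ u v : D,
      ⟪A.adjoint ⟨(u : H), hDsub u.2⟩, (v : H)⟫_ℂ
          - ⟪(u : H), A.adjoint ⟨(v : H), hDsub v.2⟩⟫_ℂ
        = ⟪(T u).snd, (T v).fst⟫_ℂ - ⟪(T u).fst, (T v).snd⟫_ℂ)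
    (A₁ A₂ : H →ₗ.[ℂ] H)
    (hA₁ : A ≤ A₁) (hsa₁ : A₁.adjoint = A₁) (hdom₁ : A₁.domain ≤ D)
    (hA₂ : A ≤ A₂) (hsa₂ : A₂.adjoint = A₂) (hdom₂ : A₂.domain ≤ D)
    (ζ : ℂ) (R₁ R₂ R₂' : H →L[ℂ] H)
    (hm₁ : ∀ f : H, R₁ f ∈ A₁.domain)
    (hr₁ : ∀ f : H, A₁ ⟨R₁ f, hm₁ f⟩ - ζ • R₁ f = f)
    (hm₂ : ∀ f : H, R₂ f ∈ A₂.domain)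
    (hr₂ : ∀ f : H, A₂ ⟨R₂ f, hm₂ f⟩ - ζ • R₂ f = f)
    (hm₂' : ∀ f : H, R₂' f ∈ A₂.domain)
    (hr₂c : ∀ f : H, A₂ ⟨R₂' f, hm₂' f⟩ - (starRingEnd ℂ ζ) • R₂' f = f)
    (TR₁ TR₂' : H →L[ℂ] WithLp 2 (𝔥 × 𝔥))
    (hTR₁ : ∀ f : H, TR₁ f = T ⟨R₁ f, hdom₁ (hm₁ f)⟩)
    (hTR₂' : ∀ f : H, TR₂' f = T ⟨R₂' f, hdom₂ (hm₂' f)⟩)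
    -- `Q₁`, `Q₂`: orthogonal projections onto the closures of `T(dom A₁)`, `T(dom A₂)`
    (Q₁ Q₂ : WithLp 2 (𝔥 × 𝔥) →L[ℂ] WithLp 2 (𝔥 × 𝔥))
    (hsaQ₁ : IsSelfAdjoint Q₁) (hidemQ₁ : IsIdempotentElem Q₁)
    (hsaQ₂ : IsSelfAdjoint Q₂) (hidemQ₂ : IsIdempotentElem Q₂)
    (hranQ₁ : LinearMap.range (Q₁ : WithLp 2 (𝔥 × 𝔥) →ₗ[ℂ] WithLp 2 (𝔥 × 𝔥))
      = ((A₁.domain.comap D.subtype).map T).topologicalClosure)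
    (hranQ₂ : LinearMap.range (Q₂ : WithLp 2 (𝔥 × 𝔥) →ₗ[ℂ] WithLp 2 (𝔥 × 𝔥))
      = ((A₂.domain.comap D.subtype).map T).topologicalClosure)
    -- the ranges of `Q₁` and `Q₂` are Lagrangian
    (hLag₁ : ∀ p : WithLp 2 (𝔥 × 𝔥),
      p ∈ LinearMap.range (Q₁ : WithLp 2 (𝔥 × 𝔥) →ₗ[ℂ] WithLp 2 (𝔥 × 𝔥)) ↔ ∀ q ∈ LinearMap.range (Q₁ : WithLp 2 (𝔥 × 𝔥) →ₗ[ℂ] WithLp 2 (𝔥 × 𝔥)), ⟪Jsymp 𝔥 p, q⟫_ℂ = 0) :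
    R₂ - R₁
        = (ContinuousLinearMap.adjoint TR₂') ∘L (Q₂ ∘L (Jsymp 𝔥 ∘L (Q₁ ∘L TR₁))) ∧
      R₂ - R₁
        = (ContinuousLinearMap.adjoint TR₂') ∘L
            ((Q₂ - Q₁) ∘L (Jsymp 𝔥 ∘L (Q₁ ∘L TR₁))) ∧
      ‖R₂ - R₁‖ ≤ ‖TR₂'‖ * (‖Q₂ - Q₁‖ * ‖TR₁‖) := by
  have hkrein := symplectic_krein_formula hdense hDsub hGreen hA₁ hsa₁ hdom₁ hA₂ hsa₂ hdom₂
    hm₁ hr₁ hm₂ hr₂ hm₂' hr₂c hTR₁ hTR₂'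
  have hmem₁ : ∀ g, TR₁ g ∈ LinearMap.range (Q₁ : WithLp 2 (𝔥 × 𝔥) →ₗ[ℂ] WithLp 2 (𝔥 × 𝔥)) :=
    fun g => hranQ₁ ▸ hTR₁ g ▸
      Submodule.le_topologicalClosure _ (Submodule.mem_map_of_mem (hm₁ g))
  have hmem₂ : ∀ f, TR₂' f ∈ LinearMap.range (Q₂ : WithLp 2 (𝔥 × 𝔥) →ₗ[ℂ] WithLp 2 (𝔥 × 𝔥)) :=
    fun f => hranQ₂ ▸ hTR₂' f ▸
      Submodule.le_topologicalClosure _ (Submodule.mem_map_of_mem (hm₂' f))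
  have hQ₁TR₁ : Q₁ ∘L TR₁ = TR₁ := comp_eq_self_of_forall_mem_range hidemQ₁ hmem₁
  have hTR₂'Q₂ : adjoint TR₂' ∘L Q₂ = adjoint TR₂' := by
    rw [← hsaQ₂.adjoint_eq, ← adjoint_comp, comp_eq_self_of_forall_mem_range hidemQ₂ hmem₂]
  have hQ₁JTR₁ : Q₁ ∘L (Jsymp 𝔥 ∘L TR₁) = 0 :=
    ext fun g => apply_apply_eq_zero_of_isotropic hsaQ₁ (fun p => (hLag₁ p).1) (hmem₁ g)
  have hQ₂ : R₂ - R₁ = adjoint TR₂' ∘L (Q₂ ∘L (Jsymp 𝔥 ∘L (Q₁ ∘L TR₁))) := by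
    rw [hQ₁TR₁, ← comp_assoc, hTR₂'Q₂, hkrein]
  have hQ₂Q₁ : R₂ - R₁ = adjoint TR₂' ∘L ((Q₂ - Q₁) ∘L (Jsymp 𝔥 ∘L (Q₁ ∘L TR₁))) := by
    rw [hQ₂, hQ₁TR₁, sub_comp, hQ₁JTR₁, sub_zero]
  refine ⟨hQ₂, hQ₂Q₁, ?_⟩
  calc ‖R₂ - R₁‖ ≤ ‖adjoint TR₂'‖ * (‖Q₂ - Q₁‖ * ‖Jsymp 𝔥 ∘L TR₁‖) := by
        rw [hQ₂Q₁, hQ₁TR₁]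
        exact (opNorm_comp_le _ _).trans (by gcongr; exact opNorm_comp_le _ _)
    _ ≤ ‖TR₂'‖ * (‖Q₂ - Q₁‖ * ‖TR₁‖) := by
        rw [LinearIsometryEquiv.norm_map]
        gcongr
        exact opNorm_Jsymp_comp_le TR₁

/-- In the setting of the symplectic Krein formula, assume additionally
that the closures of `T(dom A₁)` and `T(dom A₂)` are Lagrangian subspaces of `𝔥 × 𝔥` with
orthogonal projections `Q₁` and `Q₂`.  Then
`R₂(ζ) − R₁(ζ) = (T R₂(ζ̄))* Q₂ J Q₁ (T R₁(ζ))`, consequently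
`R₂(ζ) − R₁(ζ) = (T R₂(ζ̄))* (Q₂ − Q₁) J Q₁ (T R₁(ζ))`, and in particular
`‖R₂(ζ) − R₁(ζ)‖ ≤ ‖T R₂(ζ̄)‖ ‖Q₂ − Q₁‖ ‖T R₁(ζ)‖`. -/
theorem symplectic_krein_formula_projections
    {H 𝔥 : Type*}
    [NormedAddCommGroup H] [InnerProductSpace ℂ H] [CompleteSpace H]
    [NormedAddCommGroup 𝔥] [InnerProductSpace ℂ 𝔥] [CompleteSpace 𝔥]
    (A : H →ₗ.[ℂ] H)
    (hdense : Dense (A.domain : Set H))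
    (hclosed : A.IsClosed)
    (hsym : ∀ u v : A.domain, ⟪A u, (v : H)⟫_ℂ = ⟪(u : H), A v⟫_ℂ)
    (D : Submodule ℂ H)
    (hDsub : D ≤ A.adjoint.domain)
    (hAD : A.domain ≤ D)
    (T : D →ₗ[ℂ] WithLp 2 (𝔥 × 𝔥))
    (hTdense : DenseRange T)
    (hGreen : ∀ u v : D,
      ⟪A.adjoint ⟨(u : H), hDsub u.2⟩, (v : H)⟫_ℂ
          - ⟪(u : H), A.adjoint ⟨(v : H), hDsub v.2⟩⟫_ℂ
        = ⟪(T u).snd, (T v).fst⟫_ℂ - ⟪(T u).fst, (T v).snd⟫_ℂ)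
    (A₁ A₂ : H →ₗ.[ℂ] H)
    (hA₁ : A ≤ A₁) (hsa₁ : A₁.adjoint = A₁) (hdom₁ : A₁.domain ≤ D)
    (hA₂ : A ≤ A₂) (hsa₂ : A₂.adjoint = A₂) (hdom₂ : A₂.domain ≤ D)
    (ζ : ℂ) (R₁ R₂ R₂' : H →L[ℂ] H)
    (hm₁ : ∀ f : H, R₁ f ∈ A₁.domain)
    (hr₁ : ∀ f : H, A₁ ⟨R₁ f, hm₁ f⟩ - ζ • R₁ f = f)
    (hr₁' : ∀ u : A₁.domain, R₁ (A₁ u - ζ • (u : H)) = (u : H))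
    (hm₂ : ∀ f : H, R₂ f ∈ A₂.domain)
    (hr₂ : ∀ f : H, A₂ ⟨R₂ f, hm₂ f⟩ - ζ • R₂ f = f)
    (hr₂' : ∀ u : A₂.domain, R₂ (A₂ u - ζ • (u : H)) = (u : H))
    (hm₂' : ∀ f : H, R₂' f ∈ A₂.domain)
    (hr₂c : ∀ f : H, A₂ ⟨R₂' f, hm₂' f⟩ - (starRingEnd ℂ ζ) • R₂' f = f)
    (hr₂c' : ∀ u : A₂.domain, R₂' (A₂ u - (starRingEnd ℂ ζ) • (u : H)) = (u : H))
    (TR₁ TR₂' : H →L[ℂ] WithLp 2 (𝔥 × 𝔥))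
    (hTR₁ : ∀ f : H, TR₁ f = T ⟨R₁ f, hdom₁ (hm₁ f)⟩)
    (hTR₂' : ∀ f : H, TR₂' f = T ⟨R₂' f, hdom₂ (hm₂' f)⟩)
    -- `Q₁`, `Q₂`: orthogonal projections onto the closures of `T(dom A₁)`, `T(dom A₂)`
    (Q₁ Q₂ : WithLp 2 (𝔥 × 𝔥) →L[ℂ] WithLp 2 (𝔥 × 𝔥))
    (hsaQ₁ : IsSelfAdjoint Q₁) (hidemQ₁ : IsIdempotentElem Q₁)
    (hsaQ₂ : IsSelfAdjoint Q₂) (hidemQ₂ : IsIdempotentElem Q₂)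
    (hranQ₁ : LinearMap.range (Q₁ : WithLp 2 (𝔥 × 𝔥) →ₗ[ℂ] WithLp 2 (𝔥 × 𝔥))
      = ((A₁.domain.comap D.subtype).map T).topologicalClosure)
    (hranQ₂ : LinearMap.range (Q₂ : WithLp 2 (𝔥 × 𝔥) →ₗ[ℂ] WithLp 2 (𝔥 × 𝔥))
      = ((A₂.domain.comap D.subtype).map T).topologicalClosure)
    -- the ranges of `Q₁` and `Q₂` are Lagrangian
    (hLag₁ : ∀ p : WithLp 2 (𝔥 × 𝔥),
      p ∈ LinearMap.range (Q₁ : WithLp 2 (𝔥 × 𝔥) →ₗ[ℂ] WithLp 2 (𝔥 × 𝔥)) ↔ ∀ q ∈ LinearMap.range (Q₁ : WithLp 2 (𝔥 × 𝔥) →ₗ[ℂ] WithLp 2 (𝔥 × 𝔥)), ⟪Jsymp 𝔥 p, q⟫_ℂ = 0)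
    (hLag₂ : ∀ p : WithLp 2 (𝔥 × 𝔥),
      p ∈ LinearMap.range (Q₂ : WithLp 2 (𝔥 × 𝔥) →ₗ[ℂ] WithLp 2 (𝔥 × 𝔥)) ↔ ∀ q ∈ LinearMap.range (Q₂ : WithLp 2 (𝔥 × 𝔥) →ₗ[ℂ] WithLp 2 (𝔥 × 𝔥)), ⟪Jsymp 𝔥 p, q⟫_ℂ = 0) :
    R₂ - R₁
        = (ContinuousLinearMap.adjoint TR₂') ∘L (Q₂ ∘L (Jsymp 𝔥 ∘L (Q₁ ∘L TR₁))) ∧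
      R₂ - R₁
        = (ContinuousLinearMap.adjoint TR₂') ∘L
            ((Q₂ - Q₁) ∘L (Jsymp 𝔥 ∘L (Q₁ ∘L TR₁))) ∧
      ‖R₂ - R₁‖ ≤ ‖TR₂'‖ * (‖Q₂ - Q₁‖ * ‖TR₁‖) :=
  symplectic_krein_formula_projections_general A hdense D hDsub T hGreen A₁ A₂ hA₁ hsa₁ hdom₁ hA₂
    hsa₂ hdom₂ ζ R₁ R₂ R₂' hm₁ hr₁ hm₂ hr₂ hm₂' hr₂c TR₁ TR₂' hTR₁ hTR₂' Q₁ Q₂ hsaQ₁ hidemQ₁ hsaQ₂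
    hidemQ₂ hranQ₁ hranQ₂ hLag₁
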